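/- Let M be a finite metabelian 3-group with M^ab ≅ Z/3 × Z/3 and coclass cc(M) ≥ 2 (i.e. M is not of maximal class). Then no maximal subgroup of M is abelian. -/

import Mathlib

/-!
Let `A` be an abelian maximal subgroup of a `p`-group `G` with `|G : G'| = p²`. Then `A` is
normal of index `p` and `G = A ⟨x⟩` for any `x ∉ A`. Because `A` is abelian and normal,
`φ : a ↦ ⁅a, x⁆` is a homomorphism `A → G`. Modulo `φ(A)` the generators `A` and `x` commute,
so `G' ≤ φ(A)` and `|ker φ| = |A| / |φ(A)| ≤ |A| / |G'| = p`. For `i ≥ 1` we have `γᵢ ≤ A` and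
`φ(γᵢ) ≤ γᵢ₊₁`, hence `|γᵢ : γᵢ₊₁| ≤ |ker φ| ≤ p`, and `|G| = p² |G'| ≤ p ^ (cl G + 1)`:
`G` has maximal class.
-/

open scoped commutatorElement

theorem IsCoatom.sup_zpowers_eq_top {G : Type*} [Group G] {A : Subgroup G} (hA : IsCoatom A)
    {x : G} (hx : x ∉ A) : A ⊔ Subgroup.zpowers x = ⊤ :=
  hA.2 _ (left_lt_sup.mpr fun h => hx (Subgroup.zpowers_le.mp h))

theorem IsPGroup.le_index_of_ne_top {G : Type*} [Group G] [Finite G] {p : ℕ} [Fact p.Prime]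
    (hG : IsPGroup p G) {H : Subgroup G} (hH : H ≠ ⊤) : p ≤ H.index := by
  obtain ⟨k, hk⟩ := hG.index H
  have hk0 : k ≠ 0 := by
    rintro rfl
    exact hH (Subgroup.index_eq_one.mp (hk.trans (pow_zero p)))
  exact hk ▸ Nat.le_self_pow hk0 p

namespace Subgroup

variable {G : Type*} [Group G] (A : Subgroup G) [A.Normal] (x : G)

theorem commutatorElement_mem_left {a : G} (ha : a ∈ A) : ⁅a, x⁆ ∈ A :=
  commutator_le_left A ⊤ (commutator_mem_commutator ha (mem_top x))

variable [IsMulCommutative A]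

def commutatorHom : A →* G :=
  MonoidHom.mk' (fun a => ⁅(a : G), x⁆) fun a b => by
    have hbx := commutatorElement_mem_left A x b.2
    calc ⁅((a * b : A) : G), x⁆ = a * ⁅(b : G), x⁆ * (a : G)⁻¹ * ⁅(a : G), x⁆ := by
          simp only [coe_mul, commutatorElement_def]; group
      _ = ⁅(b : G), x⁆ * ⁅(a : G), x⁆ := by
          rw [setLike_mul_comm a.2 hbx]; group
      _ = ⁅(a : G), x⁆ * ⁅(b : G), x⁆ :=
          setLike_mul_comm hbx (commutatorElement_mem_left A x a.2)

theorem range_commutatorHom_le : (A.commutatorHom x).range ≤ A := by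
  rintro _ ⟨a, rfl⟩
  exact commutatorElement_mem_left A x a.2

theorem card_le_card_ker_commutatorHom_mul [Finite G] {N : Subgroup G} (hN : N ≤ A) :
    Nat.card N ≤ Nat.card (A.commutatorHom x).ker * Nat.card (⁅N, ⊤⁆ : Subgroup G) := by
  set ψ := (A.commutatorHom x).comp (inclusion hN)
  have hker : Nat.card ψ.ker ≤ Nat.card (A.commutatorHom x).ker := by
    rw [← card_map_of_injective (inclusion_injective hN)]
    exact card_le_of_le (by rintro _ ⟨a, ha, rfl⟩; exact ha)
  have hrange : ψ.range ≤ ⁅N, ⊤⁆ := by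
    rintro _ ⟨a, rfl⟩
    exact commutator_mem_commutator a.2 (mem_top x)
  calc Nat.card N = Nat.card ψ.ker * Nat.card ψ.range := by rw [← index_ker, card_mul_index]
    _ ≤ Nat.card (A.commutatorHom x).ker * Nat.card (⁅N, ⊤⁆ : Subgroup G) :=
      Nat.mul_le_mul hker (card_le_of_le hrange)

variable {A x}

theorem normal_range_commutatorHom (hx : A ⊔ zpowers x = ⊤) :
    (A.commutatorHom x).range.Normal := by
  rw [← normalizer_eq_top_iff, eq_top_iff, ← hx, sup_le_iff, le_normalizer_iff, le_normalizer_iff]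
  constructor
  · intro a ha k hk
    rw [setLike_mul_comm ha (range_commutatorHom_le A x hk), mul_inv_cancel_right]
    exact hk
  · rintro g ⟨m, rfl⟩ _ ⟨a, rfl⟩
    refine ⟨⟨x ^ m * a * (x ^ m)⁻¹, Normal.conj_mem ‹_› _ a.2 _⟩, ?_⟩
    have hconj := map_commutatorElement (MulAut.conj (x ^ m)) (a : G) x
    simp only [MulAut.conj_apply, (Commute.zpow_self x m).eq, mul_inv_cancel_right] at hconj
    exact hconj.symm

theorem commutator_le_range_commutatorHom (hx : A ⊔ zpowers x = ⊤) :
    _root_.commutator G ≤ (A.commutatorHom x).range := by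
  set K := (A.commutatorHom x).range
  have := normal_range_commutatorHom hx
  set π := QuotientGroup.mk' K
  have hgen : closure (π '' A ∪ {π x}) = π.range := by
    rw [← Set.image_singleton, ← Set.image_union, ← MonoidHom.map_closure, closure_union,
      closure_eq, ← zpowers_eq_closure, hx, MonoidHom.range_eq_map]
  have hcomm : ∀ u ∈ π '' A ∪ {π x}, ∀ v ∈ π '' A ∪ {π x}, u * v = v * u := by
    have hax : ∀ a ∈ A, π a * π x = π x * π a := fun a ha => by
      rw [← commutatorElement_eq_one_iff_mul_comm, ← map_commutatorElement,
        ← MonoidHom.mem_ker, QuotientGroup.ker_mk']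
      exact ⟨⟨a, ha⟩, rfl⟩
    rintro _ (⟨a, ha, rfl⟩ | rfl) _ (⟨b, hb, rfl⟩ | rfl)
    · rw [← map_mul, ← map_mul, setLike_mul_comm ha hb]
    · exact hax a ha
    · exact (hax b hb).symm
    · rfl
  have := isMulCommutative_closure hcomm
  rw [hgen, ← commutator_self_eq_bot_iff, ← map_commutator_eq, map_eq_bot_iff,
    QuotientGroup.ker_mk'] at this
  exact this

theorem card_ker_commutatorHom_mul_index_le [Finite G] (hx : A ⊔ zpowers x = ⊤) :
    Nat.card (A.commutatorHom x).ker * A.index ≤ (_root_.commutator G).index := by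
  set φ := A.commutatorHom x
  have hA : Nat.card φ.ker * Nat.card φ.range = Nat.card A := by
    rw [← index_ker, card_mul_index]
  have hG' : Nat.card (_root_.commutator G) ≤ Nat.card φ.range :=
    card_le_of_le (commutator_le_range_commutatorHom hx)
  refine Nat.le_of_mul_le_mul_right ?_ (Nat.card_pos (α := φ.range))
  calc Nat.card φ.ker * A.index * Nat.card φ.range = Nat.card G := by
        rw [mul_right_comm, hA, card_mul_index]
    _ = Nat.card (_root_.commutator G) * (_root_.commutator G).index := (card_mul_index _).symm
    _ ≤ Nat.card φ.range * (_root_.commutator G).index := Nat.mul_le_mul_right _ hG'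
    _ = (_root_.commutator G).index * Nat.card φ.range := mul_comm _ _

theorem top_lowerCentralSeries_succ_le (hx : A ⊔ zpowers x = ⊤) (i : ℕ) :
    (⊤ : Subgroup G).lowerCentralSeries (i + 1) ≤ A :=
  calc (⊤ : Subgroup G).lowerCentralSeries (i + 1)
      ≤ (⊤ : Subgroup G).lowerCentralSeries 1 := lowerCentralSeries_antitone _ (by omega)
    _ = _root_.commutator G := top_lowerCentralSeries_one
    _ ≤ (A.commutatorHom x).range := commutator_le_range_commutatorHom hx
    _ ≤ A := range_commutatorHom_le A x

theorem card_commutator_le_card_ker_commutatorHom_pow_mul [Finite G] (hx : A ⊔ zpowers x = ⊤)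
    (j : ℕ) : Nat.card (_root_.commutator G) ≤ Nat.card (A.commutatorHom x).ker ^ j *
      Nat.card ((⊤ : Subgroup G).lowerCentralSeries (j + 1)) := by
  induction j with
  | zero => rw [pow_zero, one_mul, top_lowerCentralSeries_one]
  | succ j ih =>
    calc _ ≤ _ := ih
      _ ≤ _ := Nat.mul_le_mul_left _
          (card_le_card_ker_commutatorHom_mul A x (top_lowerCentralSeries_succ_le hx j))
      _ = _ := by rw [pow_succ, mul_assoc]; rfl

end Subgroup

theorem IsPGroup.card_le_pow_succ_of_isCoatom {G : Type*} [Group G] [Finite G] {p : ℕ}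
    [Fact p.Prime] (hG : IsPGroup p G) (hG' : (commutator G).index ≤ p ^ 2) {A : Subgroup G}
    (hA : IsCoatom A) [IsMulCommutative A] {c : ℕ}
    (hc : (⊤ : Subgroup G).lowerCentralSeries c = ⊥) : Nat.card G ≤ p ^ (c + 1) := by
  have := hG.isNilpotent
  have : A.Normal :=
    Subgroup.NormalizerCondition.normal_of_coatom A Group.normalizerCondition_of_isNilpotent hA
  obtain ⟨x, hx⟩ := SetLike.exists_not_mem_of_ne_top A hA.1
  have hsup := hA.sup_zpowers_eq_top hx
  have hker : Nat.card (A.commutatorHom x).ker ≤ p := by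
    refine Nat.le_of_mul_le_mul_right ?_ (Fact.out : p.Prime).pos
    calc Nat.card (A.commutatorHom x).ker * p
        ≤ Nat.card (A.commutatorHom x).ker * A.index :=
          Nat.mul_le_mul_left _ (hG.le_index_of_ne_top hA.1)
      _ ≤ (commutator G).index := Subgroup.card_ker_commutatorHom_mul_index_le hsup
      _ ≤ p * p := hG'.trans_eq (sq p)
  cases c with
  | zero =>
    rw [Subgroup.lowerCentralSeries_zero] at hc
    rw [← Subgroup.card_top, hc, Subgroup.card_bot]
    exact Nat.one_le_pow _ _ (Fact.out : p.Prime).pos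
  | succ j =>
    calc Nat.card G = Nat.card (commutator G) * (commutator G).index :=
          (Subgroup.card_mul_index _).symm
      _ ≤ (p ^ j * 1) * p ^ 2 := by
        refine Nat.mul_le_mul ?_ hG'
        have := Subgroup.card_commutator_le_card_ker_commutatorHom_pow_mul hsup j
        rw [hc, Subgroup.card_bot] at this
        exact this.trans (Nat.mul_le_mul_right _ (Nat.pow_le_pow_left hker j))
      _ = p ^ (j + 1 + 1) := by ring

theorem no_abelian_maximal_subgroup_general
    (M : Type*) [Group M] [Finite M] (n c : ℕ)
    (hcard : Nat.card M = 3 ^ n)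
    (hab : Nonempty (Abelianization M ≃* Multiplicative (ZMod 3 × ZMod 3)))
    (hcl : IsLeast {i | (⊤ : Subgroup M).lowerCentralSeries i = ⊥} c)
    (hr2 : 2 ≤ n - c) :
    ∀ H : Subgroup M, IsCoatom H → ¬ IsMulCommutative H := by
  intro H hH hHc
  have : Fact (Nat.Prime 3) := ⟨Nat.prime_three⟩
  have hindex : (commutator M).index = 3 ^ 2 := by
    obtain ⟨e⟩ := hab
    exact (Nat.card_congr e.toEquiv).trans (by simp)
  have hle := (IsPGroup.of_card hcard).card_le_pow_succ_of_isCoatom hindex.le hH hcl.1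
  rw [hcard, Nat.pow_le_pow_iff_right (by norm_num)] at hle
  omega

/-- Let `M` be a finite metabelian 3-group with
`M^ab ≅ Z/3 × Z/3` and coclass `cc(M) ≥ 2` (not of maximal class).
Then no maximal subgroup of `M` is abelian. -/
theorem no_abelian_maximal_subgroup
    (M : Type*) [Group M] [Finite M] (n c : ℕ)
    (hmeta : IsMulCommutative (commutator M))
    (hcard : Nat.card M = 3 ^ n)
    (hab : Nonempty (Abelianization M ≃* Multiplicative (ZMod 3 × ZMod 3)))
    (hcl : IsLeast {i | (⊤ : Subgroup M).lowerCentralSeries i = ⊥} c)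
    (hr2 : 2 ≤ n - c) :
    ∀ H : Subgroup M, IsCoatom H → ¬ IsMulCommutative H :=
  no_abelian_maximal_subgroup_general M n c hcard hab hcl hr2
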